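/- arXiv:math/0506172 — 12 statements merged into one kernel-verified Lean document; each statement's English description precedes it below -/
import Mathlib

section
/- Let F be a field of characteristic zero, A a commutative associative unital F-algebra, σ an F-algebra endomorphism of A, and ∂ a σ-derivation on A. Then for all a, b, c ∈ A one has σ(a)·∂(b·∂(c)) − σ(b)·∂(a·∂(c)) = (σ(a)·∂(b) − σ(b)·∂(a))·∂(c). In other words, the composition (σ(a)·∂)∘(b·∂) − (σ(b)·∂)∘(a·∂) of the operators a·∂ and b·∂ on A equals the single operator (σ(a)∂(b) − σ(b)∂(a))·∂, so the bracket ⟨a·∂, b·∂⟩ := (σ(a)·∂)∘(b·∂) − (σ(b)·∂)∘(a·∂) again lies in A·∂ and is given by the closed formula (σ(a)∂(b) − σ(b)∂(a))·∂. -/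
/-- For a commutative associative unital `F`-algebra `A` (with `F` a field of
characteristic zero), an `F`-algebra endomorphism `σ` of `A` and a `σ`-derivation `D` on `A`,
the composition of the operators `a·D` and `b·D` twisted by `σ` collapses to a single
operator: `σ(a)·D(b·D(c)) − σ(b)·D(a·D(c)) = (σ(a)·D(b) − σ(b)·D(a))·D(c)` for all
`a, b, c ∈ A`. -/
theorem bracket_closure
    (F : Type*) [Field F] [CharZero F]
    (A : Type*) [CommRing A] [Algebra F A]
    (σ : A →ₐ[F] A) (D : A →ₗ[F] A)
    (hLeib : ∀ a b : A, D (a * b) = D a * b + σ a * D b) :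
    ∀ a b c : A,
      σ a * D (b * D c) - σ b * D (a * D c)
        = (σ a * D b - σ b * D a) * D c := by
  intro a b c
  rw [hLeib, hLeib]
  ring
end

section
/- Let F be a field of characteristic zero, A a commutative associative unital F-algebra, σ an F-algebra endomorphism of A, and ∂ a σ-derivation on A. Define Ann(∂) := {a ∈ A : a·∂(c) = 0 for all c ∈ A} and assume σ(Ann(∂)) ⊆ Ann(∂). If a, a', b, b' ∈ A satisfy a·∂(c) = a'·∂(c) and b·∂(c) = b'·∂(c) for all c ∈ A (i.e. a·∂ = a'·∂ and b·∂ = b'·∂ as operators), then (σ(a)∂(b) − σ(b)∂(a))·∂(c) = (σ(a')∂(b') − σ(b')∂(a'))·∂(c) for all c ∈ A; that is, the bracket ⟨a·∂, b·∂⟩ := (σ(a)∂(b) − σ(b)∂(a))·∂ is a well-defined operation on the A-module A·∂. -/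
/-- Under the annihilator condition `σ(Ann(D)) ⊆ Ann(D)`, the bracket
`⟨a·D, b·D⟩ := (σ(a)D(b) − σ(b)D(a))·D` is well defined on the module `A·D`: if
`a·D = a'·D` and `b·D = b'·D` as operators, then the brackets agree as operators. -/
theorem bracket_well_defined
    (F : Type*) [Field F] [CharZero F]
    (A : Type*) [CommRing A] [Algebra F A]
    (σ : A →ₐ[F] A) (D : A →ₗ[F] A)
    (hLeib : ∀ a b : A, D (a * b) = D a * b + σ a * D b)
    (hAnn : ∀ a : A, (∀ c : A, a * D c = 0) → (∀ c : A, σ a * D c = 0))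
    (a a' b b' : A)
    (ha : ∀ c : A, a * D c = a' * D c)
    (hb : ∀ c : A, b * D c = b' * D c) :
    ∀ c : A, (σ a * D b - σ b * D a) * D c
      = (σ a' * D b' - σ b' * D a') * D c := by
  have hu : ∀ c : A, (a - a') * D c = 0 := fun c => by rw [sub_mul, ha c, sub_self]
  have hv : ∀ c : A, (b - b') * D c = 0 := fun c => by rw [sub_mul, hb c, sub_self]
  have hσu : ∀ c : A, (σ a - σ a') * D c = 0 := fun c => by
    have := hAnn _ hu c; rwa [map_sub] at this
  have hσv : ∀ c : A, (σ b - σ b') * D c = 0 := fun c => by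
    have := hAnn _ hv c; rwa [map_sub] at this
  have hDu : ∀ c : A, (D a - D a') * D c = 0 := fun c => by
    have h0 : D ((a - a') * D c) = 0 := by rw [hu c, map_zero]
    rw [hLeib] at h0
    have h1 := hAnn _ hu (D c)
    rw [h1, add_zero] at h0
    rwa [map_sub] at h0
  have hDv : ∀ c : A, (D b - D b') * D c = 0 := fun c => by
    have h0 : D ((b - b') * D c) = 0 := by rw [hv c, map_zero]
    rw [hLeib] at h0
    have h1 := hAnn _ hv (D c)
    rw [h1, add_zero] at h0
    rwa [map_sub] at h0
  intro c
  linear_combination (D b) * hσu c + (σ a') * hDv c - (D a) * hσv c - (σ b') * hDu c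
end

section
/- Let F be a field of characteristic zero, A a commutative associative unital F-algebra, σ an F-algebra endomorphism of A, ∂ a σ-derivation on A, and δ ∈ A an element such that ∂(σ(a)) = δ·σ(∂(a)) for all a ∈ A. Define the bilinear operation β : A × A → A by β(a,b) := σ(a)·∂(b) − σ(b)·∂(a). Then the twisted six-term Jacobi identity holds: for all a, b, c ∈ A, the cyclic sum over (a,b,c) of β(σ(a), β(b,c)) + δ·β(a, β(b,c)) equals zero, i.e. β(σ(a),β(b,c)) + β(σ(b),β(c,a)) + β(σ(c),β(a,b)) + δ·(β(a,β(b,c)) + β(b,β(c,a)) + β(c,β(a,b))) = 0. -/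
/-- The coefficient `β(a,b) = σ(a)·D(b) − σ(b)·D(a)` of the bracket
`⟨a·D, b·D⟩ = β(a,b)·D`. -/
def beta {F : Type*} [Field F] {A : Type*} [CommRing A] [Algebra F A]
    (σ : A →ₐ[F] A) (D : A →ₗ[F] A) (x y : A) : A :=
  σ x * D y - σ y * D x

/-- twisted six-term Jacobi identity in coefficient form. If
`D(σ(a)) = δ·σ(D(a))` for all `a`, then the cyclic sum over `(a,b,c)` of
`β(σ(a), β(b,c)) + δ·β(a, β(b,c))` vanishes. -/
theorem twisted_six_term_jacobi
    (F : Type*) [Field F] [CharZero F]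
    (A : Type*) [CommRing A] [Algebra F A]
    (σ : A →ₐ[F] A) (D : A →ₗ[F] A)
    (hLeib : ∀ a b : A, D (a * b) = D a * b + σ a * D b)
    (δ : A) (hδ : ∀ a : A, D (σ a) = δ * σ (D a)) :
    ∀ a b c : A,
      beta σ D (σ a) (beta σ D b c)
        + beta σ D (σ b) (beta σ D c a)
        + beta σ D (σ c) (beta σ D a b)
        + δ * (beta σ D a (beta σ D b c)
            + beta σ D b (beta σ D c a)
            + beta σ D c (beta σ D a b)) = 0 := by
  have hβ : ∀ x y : A, σ x * D y - σ y * D x = x * D y - y * D x := by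
    intro x y
    linear_combination congrArg D (mul_comm x y) - hLeib x y + hLeib y x
  have key : ∀ x y : A,
      δ * σ (D x) * D y + σ (σ x) * D (D y)
        - (δ * σ (D y) * D x + σ (σ y) * D (D x))
      = σ x * D (D y) - σ y * D (D x) := by
    intro x y
    calc δ * σ (D x) * D y + σ (σ x) * D (D y)
          - (δ * σ (D y) * D x + σ (σ y) * D (D x))
        = D (σ x * D y - σ y * D x) := by
          rw [map_sub, hLeib, hLeib, hδ, hδ]
      _ = D (x * D y - y * D x) := by rw [hβ]
      _ = σ x * D (D y) - σ y * D (D x) := by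
          rw [map_sub, hLeib, hLeib]; ring
  intro a b c
  simp only [beta, map_sub, map_mul, hLeib, hδ]
  linear_combination δ * σ a * key b c + δ * σ b * key c a + δ * σ c * key a b
end

section
/- Let F be a field of characteristic zero, q₀, q₁, p₀ ∈ F, σ the F-algebra endomorphism of F[t] with σ(t) = q₀ + q₁t, and ∂ a σ-derivation on F[t] with ∂(t) = p₀. Then ∂(σ(a)) = q₁·σ(∂(a)) for every a ∈ F[t]; that is, the condition ∂∘σ = δ·σ∘∂ holds with δ = q₁, and consequently the twisted Jacobi identity on F[t]·∂ holds with this δ. -/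
/-- Case 1 on `F[t]`: if `σ(t) = q₀ + q₁t` and `D(t) = p₀` (a constant), then
`D(σ(a)) = q₁·σ(D(a))` for all `a ∈ F[t]`, i.e. the condition `D∘σ = δ·σ∘D` holds with
`δ = q₁`. -/
theorem delta_eq_q1_case1
    (F : Type*) [Field F] [CharZero F] (q₀ q₁ p₀ : F)
    (σ : Polynomial F →ₐ[F] Polynomial F)
    (D : Polynomial F →ₗ[F] Polynomial F)
    (hLeib : ∀ a b : Polynomial F, D (a * b) = D a * b + σ a * D b)
    (hσ : σ Polynomial.X = Polynomial.C q₀ + Polynomial.C q₁ * Polynomial.X)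
    (hD : D Polynomial.X = Polynomial.C p₀) :
    ∀ a : Polynomial F, D (σ a) = Polynomial.C q₁ * σ (D a) := by
  have hone : D 1 = 0 := by
    have h2 : D 1 = D 1 + D 1 := by simpa using hLeib 1 1
    exact (left_eq_add.mp h2)
  have hC : ∀ c : F, D (Polynomial.C c) = 0 := by
    intro c
    have h : (Polynomial.C c : Polynomial F) = c • (1 : Polynomial F) := by
      rw [Polynomial.smul_eq_C_mul, mul_one]
    rw [h, map_smul, hone, smul_zero]
  have hσC : ∀ c : F, σ (Polynomial.C c) = Polynomial.C c := by
    intro c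
    simpa [Polynomial.algebraMap_eq] using σ.commutes c
  have hDσX : D (σ Polynomial.X) = Polynomial.C q₁ * Polynomial.C p₀ := by
    rw [hσ, map_add, hC, hLeib, hC, hσC, hD]
    ring
  intro a
  induction a using Polynomial.induction_on with
  | C c =>
      rw [hσC, hC]
      simp
  | add p q hp hq =>
      simp only [map_add, hp, hq, mul_add]
  | monomial n c ih =>
      have e1 : Polynomial.C c * Polynomial.X ^ (n + 1)
          = (Polynomial.C c * Polynomial.X ^ n) * Polynomial.X := by ring
      rw [e1, map_mul σ, hLeib, ih, hDσX,
        hLeib (Polynomial.C c * Polynomial.X ^ n) Polynomial.X, hD]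
      simp only [map_add, map_mul, hσ, hσC]
      ring
end

section
/- Let F be a field of characteristic zero, q₀, q₁, p₀ ∈ F, σ the F-algebra endomorphism of F[t] with σ(t) = q₀ + q₁t, and ∂ a σ-derivation on F[t] with ∂(t) = p₀. Set e := ∂, h := −2t·∂, f := −t²·∂ as operators on F[t] and define the bracket ⟨a·∂, b·∂⟩ := (σ(a)∂(b) − σ(b)∂(a))·∂. Then the span of {e,h,f} is closed under the bracket, with ⟨h,f⟩ = −q₀p₀·h − 2q₁p₀·f, ⟨h,e⟩ = 2p₀·e, and ⟨e,f⟩ = −q₀p₀·e + ((q₁+1)/2)p₀·h. -/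
open Polynomial in
/-- Case 1: `σ(t) = q₀ + q₁t`, `D(t) = p₀` on `F[t]`. With `e := D`,
`h := −2t·D`, `f := −t²·D` and bracket `⟨a·D, b·D⟩ := (σ(a)D(b) − σ(b)D(a))·D`, the span of
`{e,h,f}` is closed under the bracket, with `⟨h,f⟩ = −q₀p₀·h − 2q₁p₀·f`, `⟨h,e⟩ = 2p₀·e`,
and `⟨e,f⟩ = −q₀p₀·e + ((q₁+1)/2)p₀·h`. -/
theorem case1_bracket_relations
    (F : Type*) [Field F] [CharZero F] (q₀ q₁ p₀ : F)
    (σ : Polynomial F →ₐ[F] Polynomial F)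
    (D : Polynomial F →ₗ[F] Polynomial F)
    (hLeib : ∀ a b : Polynomial F, D (a * b) = D a * b + σ a * D b)
    (hσ : σ X = C q₀ + C q₁ * X)
    (hD : D X = C p₀) :
    let e : Polynomial F →ₗ[F] Polynomial F := D
    let h : Polynomial F →ₗ[F] Polynomial F := (LinearMap.mulLeft F (-(2 * X))).comp D
    let f : Polynomial F →ₗ[F] Polynomial F :=
      (LinearMap.mulLeft F (-(X ^ 2 : Polynomial F))).comp D
    let br : Polynomial F → Polynomial F → (Polynomial F →ₗ[F] Polynomial F) :=
      fun a b => (LinearMap.mulLeft F (σ a * D b - σ b * D a)).comp D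
    br (-(2 * X)) (-(X ^ 2)) = (-(q₀ * p₀)) • h + (-(2 * q₁ * p₀)) • f ∧
    br (-(2 * X)) 1 = (2 * p₀) • e ∧
    br 1 (-(X ^ 2)) = (-(q₀ * p₀)) • e + ((q₁ + 1) / 2 * p₀) • h ∧
    (∀ a b : Polynomial F,
      a ∈ Submodule.span F ({1, -(2 * X), -(X ^ 2)} : Set (Polynomial F)) →
      b ∈ Submodule.span F ({1, -(2 * X), -(X ^ 2)} : Set (Polynomial F)) →
      br a b ∈ Submodule.span F
        ({e, h, f} : Set (Polynomial F →ₗ[F] Polynomial F))) := by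
  intro e h f br
  have hD1 : D 1 = 0 := by
    have h1 := hLeib 1 1
    simp only [mul_one, map_one, one_mul] at h1
    exact left_eq_add.mp h1
  have hDC : ∀ c : F, D (C c) = 0 := by
    intro c
    have hc : (C c : Polynomial F) = c • (1 : Polynomial F) := by
      rw [Polynomial.smul_eq_C_mul, mul_one]
    rw [hc, map_smul, hD1, smul_zero]
  have hσC : ∀ c : F, σ (C c) = C c := by
    intro c
    have := σ.commutes c
    simpa [Polynomial.algebraMap_eq] using this
  have h2 : (2 : Polynomial F) = C 2 := (map_ofNat (Polynomial.C : F →+* Polynomial F) 2).symm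
  have hD2X : D (-(2 * X)) = -(2 * C p₀) := by
    rw [map_neg, h2, hLeib, hDC, hσC, hD, zero_mul, zero_add]
  have hDX2 : D (-(X ^ 2)) = -(C p₀ * X + (C q₀ + C q₁ * X) * C p₀) := by
    rw [map_neg, sq, hLeib, hD, hσ]
  have hσ2X : σ (-(2 * X)) = -(2 * (C q₀ + C q₁ * X)) := by
    have hσ2 : σ (2 : Polynomial F) = 2 := map_ofNat σ 2
    rw [map_neg, map_mul, hσ2, hσ]
  have hσX2 : σ (-(X ^ 2)) = -((C q₀ + C q₁ * X) ^ 2) := by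
    rw [map_neg, map_pow, hσ]
  have hC2 : (C ((q₁ + 1) / 2) : Polynomial F) * 2 = C q₁ + 1 := by
    have hf2 : (q₁ + 1) / 2 * 2 = q₁ + 1 := by field_simp
    rw [h2, ← map_mul, hf2, map_add, map_one]
  have E1 : br (-(2 * X)) (-(X ^ 2)) = (-(q₀ * p₀)) • h + (-(2 * q₁ * p₀)) • f := by
    refine LinearMap.ext fun c => ?_
    simp only [br, h, f, LinearMap.comp_apply, LinearMap.mulLeft_apply,
      LinearMap.add_apply, LinearMap.smul_apply, hD2X, hDX2, hσ2X, hσX2,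
      Polynomial.smul_eq_C_mul, map_neg, map_mul, map_ofNat]
    ring
  have E2 : br (-(2 * X)) 1 = (2 * p₀) • e := by
    refine LinearMap.ext fun c => ?_
    simp only [br, e, LinearMap.comp_apply, LinearMap.mulLeft_apply,
      LinearMap.smul_apply, hD2X, hD1, map_one, Polynomial.smul_eq_C_mul, map_mul, map_ofNat]
    ring
  have E3 : br 1 (-(X ^ 2)) = (-(q₀ * p₀)) • e + ((q₁ + 1) / 2 * p₀) • h := by
    refine LinearMap.ext fun c => ?_
    simp only [br, e, h, LinearMap.comp_apply, LinearMap.mulLeft_apply,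
      LinearMap.add_apply, LinearMap.smul_apply, hDX2, hσX2, hD1, map_one,
      Polynomial.smul_eq_C_mul, map_neg, map_mul]
    linear_combination (X * D c * C p₀) * hC2
  refine ⟨E1, E2, E3, ?_⟩
  intro a b ha hb
  have brAdd₁ : ∀ a a' b : Polynomial F, br (a + a') b = br a b + br a' b := by
    intro a a' b; refine LinearMap.ext fun c => ?_
    simp only [br, LinearMap.comp_apply, LinearMap.mulLeft_apply, LinearMap.add_apply,
      map_add]
    ring
  have brSmul₁ : ∀ (r : F) (a b : Polynomial F), br (r • a) b = r • br a b := by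
    intro r a b; refine LinearMap.ext fun c => ?_
    simp only [br, LinearMap.comp_apply, LinearMap.mulLeft_apply, LinearMap.smul_apply,
      map_smul]
    simp only [Polynomial.smul_eq_C_mul]
    ring
  have brAdd₂ : ∀ a b b' : Polynomial F, br a (b + b') = br a b + br a b' := by
    intro a b b'; refine LinearMap.ext fun c => ?_
    simp only [br, LinearMap.comp_apply, LinearMap.mulLeft_apply, LinearMap.add_apply,
      map_add]
    ring
  have brSmul₂ : ∀ (r : F) (a b : Polynomial F), br a (r • b) = r • br a b := by
    intro r a b; refine LinearMap.ext fun c => ?_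
    simp only [br, LinearMap.comp_apply, LinearMap.mulLeft_apply, LinearMap.smul_apply,
      map_smul]
    simp only [Polynomial.smul_eq_C_mul]
    ring
  have brZero₁ : ∀ b : Polynomial F, br 0 b = 0 := by
    intro b; refine LinearMap.ext fun c => ?_
    simp [br]
  have brZero₂ : ∀ a : Polynomial F, br a 0 = 0 := by
    intro a; refine LinearMap.ext fun c => ?_
    simp [br]
  set S : Set (Polynomial F →ₗ[F] Polynomial F) := {e, h, f} with hS
  have he : e ∈ Submodule.span F S := Submodule.subset_span (by simp [hS])
  have hh : h ∈ Submodule.span F S := Submodule.subset_span (by simp [hS])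
  have hf : f ∈ Submodule.span F S := Submodule.subset_span (by simp [hS])
  have skew : ∀ a : Polynomial F, br a a = 0 := by
    intro a; refine LinearMap.ext fun c => ?_
    simp [br]
  have neg : ∀ a b : Polynomial F, br b a = -(br a b) := by
    intro a b; refine LinearMap.ext fun c => ?_
    simp only [br, LinearMap.comp_apply, LinearMap.mulLeft_apply, LinearMap.neg_apply]
    ring
  have bhf : br (-(2 * X)) (-(X ^ 2)) ∈ Submodule.span F S := by
    rw [E1]
    exact (Submodule.span F S).add_mem
      ((Submodule.span F S).smul_mem _ hh) ((Submodule.span F S).smul_mem _ hf)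
  have bhe : br (-(2 * X)) 1 ∈ Submodule.span F S := by
    rw [E2]; exact (Submodule.span F S).smul_mem _ he
  have bef : br 1 (-(X ^ 2)) ∈ Submodule.span F S := by
    rw [E3]
    exact (Submodule.span F S).add_mem
      ((Submodule.span F S).smul_mem _ he) ((Submodule.span F S).smul_mem _ hh)
  have base : ∀ x ∈ ({1, -(2 * X), -(X ^ 2)} : Set (Polynomial F)),
      ∀ y ∈ ({1, -(2 * X), -(X ^ 2)} : Set (Polynomial F)),
      br x y ∈ Submodule.span F S := by
    intro x hx y hy
    rcases hx with rfl | rfl | rfl <;> rcases hy with rfl | rfl | rfl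
    · rw [skew]; exact (Submodule.span F S).zero_mem
    · rw [neg]; exact (Submodule.span F S).neg_mem bhe
    · exact bef
    · exact bhe
    · rw [skew]; exact (Submodule.span F S).zero_mem
    · exact bhf
    · rw [neg]; exact (Submodule.span F S).neg_mem bef
    · rw [neg]; exact (Submodule.span F S).neg_mem bhf
    · rw [skew]; exact (Submodule.span F S).zero_mem
  refine Submodule.span_induction (p := fun a _ => br a b ∈ Submodule.span F S)
    ?_ ?_ ?_ ?_ ha
  · intro x hx
    refine Submodule.span_induction (p := fun b _ => br x b ∈ Submodule.span F S)
      ?_ ?_ ?_ ?_ hb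
    · intro y hy; exact base x hx y hy
    · show br x 0 ∈ Submodule.span F S
      rw [brZero₂]; exact (Submodule.span F S).zero_mem
    · intro y z _ _ hy hz
      show br x (y + z) ∈ Submodule.span F S
      rw [brAdd₂]; exact (Submodule.span F S).add_mem hy hz
    · intro r y _ hy
      show br x (r • y) ∈ Submodule.span F S
      rw [brSmul₂]; exact (Submodule.span F S).smul_mem r hy
  · show br 0 b ∈ Submodule.span F S
    rw [brZero₁]; exact (Submodule.span F S).zero_mem
  · intro x y _ _ hx hy
    show br (x + y) b ∈ Submodule.span F S
    rw [brAdd₁]; exact (Submodule.span F S).add_mem hx hy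
  · intro r x _ hx
    show br (r • x) b ∈ Submodule.span F S
    rw [brSmul₁]; exact (Submodule.span F S).smul_mem r hx
end

section
/- Let F be a field of characteristic zero, q₀, p₀, p₁ ∈ F with q₀ ≠ 0, σ the F-algebra endomorphism of F[t] with σ(t) = q₀ (constant), and ∂ a σ-derivation on F[t] with ∂(t) = p₀ + p₁t. Set e := ∂, h := −2t·∂, f := −t²·∂ as operators on F[t] and define the bracket ⟨a·∂, b·∂⟩ := (σ(a)∂(b) − σ(b)∂(a))·∂. Then ⟨h,f⟩ = −q₀p₀·h − 2q₀p₁·f, ⟨h,e⟩ = 2p₀·e − p₁·h, and ⟨e,f⟩ = −q₀p₀·e + ((q₀p₁+p₀)/2)·h + p₁·f; in particular the span of {e,h,f} is closed under the bracket. -/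
open Polynomial in
/-- Case 2: `σ(t) = q₀` constant with `q₀ ≠ 0`, `D(t) = p₀ + p₁t` on `F[t]`.
With `e := D`, `h := −2t·D`, `f := −t²·D` and bracket
`⟨a·D, b·D⟩ := (σ(a)D(b) − σ(b)D(a))·D`, one has `⟨h,f⟩ = −q₀p₀·h − 2q₀p₁·f`,
`⟨h,e⟩ = 2p₀·e − p₁·h`, `⟨e,f⟩ = −q₀p₀·e + ((q₀p₁+p₀)/2)·h + p₁·f`; in particular the span
of `{e,h,f}` is closed under the bracket. -/
theorem case2_bracket_relations
    (F : Type*) [Field F] [CharZero F] (q₀ p₀ p₁ : F) (hq₀ : q₀ ≠ 0)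
    (σ : Polynomial F →ₐ[F] Polynomial F)
    (D : Polynomial F →ₗ[F] Polynomial F)
    (hLeib : ∀ a b : Polynomial F, D (a * b) = D a * b + σ a * D b)
    (hσ : σ X = C q₀)
    (hD : D X = C p₀ + C p₁ * X) :
    let e : Polynomial F →ₗ[F] Polynomial F := D
    let h : Polynomial F →ₗ[F] Polynomial F := (LinearMap.mulLeft F (-(2 * X))).comp D
    let f : Polynomial F →ₗ[F] Polynomial F :=
      (LinearMap.mulLeft F (-(X ^ 2 : Polynomial F))).comp D
    let br : Polynomial F → Polynomial F → (Polynomial F →ₗ[F] Polynomial F) :=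
      fun a b => (LinearMap.mulLeft F (σ a * D b - σ b * D a)).comp D
    br (-(2 * X)) (-(X ^ 2)) = (-(q₀ * p₀)) • h + (-(2 * q₀ * p₁)) • f ∧
    br (-(2 * X)) 1 = (2 * p₀) • e + (-p₁) • h ∧
    br 1 (-(X ^ 2)) = (-(q₀ * p₀)) • e + ((q₀ * p₁ + p₀) / 2) • h + p₁ • f ∧
    (∀ a b : Polynomial F,
      a ∈ Submodule.span F ({1, -(2 * X), -(X ^ 2)} : Set (Polynomial F)) →
      b ∈ Submodule.span F ({1, -(2 * X), -(X ^ 2)} : Set (Polynomial F)) →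
      br a b ∈ Submodule.span F
        ({e, h, f} : Set (Polynomial F →ₗ[F] Polynomial F))) := by
  intro e h f br
  have hD1 : D 1 = 0 := by
    have := hLeib 1 1; simp at this; exact this
  have hDX2 : D (X ^ 2) = (C p₀ + C p₁ * X) * X + C q₀ * (C p₀ + C p₁ * X) := by
    have := hLeib X X; rw [← sq, hσ, hD] at this; exact this
  have h2X : (2 * X : Polynomial F) = (2 : F) • X := by
    rw [smul_eq_C_mul, map_ofNat]
  have hD2X : D (2 * X) = 2 * (C p₀ + C p₁ * X) := by
    rw [h2X, map_smul, hD, smul_eq_C_mul, map_ofNat]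
  have hhalf : (C ((q₀ * p₁ + p₀) / 2) : Polynomial F) * 2 = C q₀ * C p₁ + C p₀ := by
    have h2 : ((2 : Polynomial F)) = C 2 := (map_ofNat (C : F →+* Polynomial F) 2).symm
    rw [h2, ← C_mul, ← C_mul, ← C_add]
    congr 1
    field_simp
  have key1 : br (-(2 * X)) (-(X ^ 2)) = (-(q₀ * p₀)) • h + (-(2 * q₀ * p₁)) • f := by
    apply LinearMap.ext; intro p
    simp only [br, h, f, hD2X, LinearMap.comp_apply, LinearMap.mulLeft_apply,
      LinearMap.add_apply, LinearMap.smul_apply, smul_eq_C_mul,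
      map_neg, map_mul, map_pow, map_ofNat, hσ, hD, hDX2, map_one, C_mul, C_neg]
    ring
  have key2 : br (-(2 * X)) 1 = (2 * p₀) • e + (-p₁) • h := by
    apply LinearMap.ext; intro p
    simp only [br, h, e, hD2X, LinearMap.comp_apply, LinearMap.mulLeft_apply,
      LinearMap.add_apply, LinearMap.smul_apply, smul_eq_C_mul,
      map_neg, map_mul, map_ofNat, hσ, hD, hD1, map_one, C_mul, C_neg]
    ring
  have key3 : br 1 (-(X ^ 2)) = (-(q₀ * p₀)) • e + ((q₀ * p₁ + p₀) / 2) • h + p₁ • f := by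
    apply LinearMap.ext; intro p
    simp only [br, h, e, f, hD2X, LinearMap.comp_apply, LinearMap.mulLeft_apply,
      LinearMap.add_apply, LinearMap.smul_apply, smul_eq_C_mul,
      map_neg, map_mul, map_pow, map_ofNat, hσ, hD, hD1, hDX2, map_one, C_mul, C_neg]
    linear_combination (X * D p) * hhalf
  refine ⟨key1, key2, key3, ?_⟩
  -- closure
  have hanti : ∀ a b, br b a = - br a b := by
    intro a b; apply LinearMap.ext; intro p
    simp only [br, LinearMap.comp_apply, LinearMap.mulLeft_apply, LinearMap.neg_apply]
    ring
  have hself : ∀ a, br a a = 0 := by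
    intro a; apply LinearMap.ext; intro p
    simp only [br, LinearMap.comp_apply, LinearMap.mulLeft_apply, LinearMap.zero_apply]
    ring
  have hadd : ∀ a a' b, br (a + a') b = br a b + br a' b := by
    intro a a' b; apply LinearMap.ext; intro p
    simp only [br, LinearMap.comp_apply, LinearMap.mulLeft_apply, LinearMap.add_apply,
      map_add]
    ring
  have hsmul : ∀ (c : F) a b, br (c • a) b = c • br a b := by
    intro c a b; apply LinearMap.ext; intro p
    simp only [br, LinearMap.comp_apply, LinearMap.mulLeft_apply, LinearMap.smul_apply,
      map_smul]
    simp only [smul_eq_C_mul]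
    ring
  intro a b ha hb
  set S := Submodule.span F ({e, h, f} : Set (Polynomial F →ₗ[F] Polynomial F)) with hS
  have he : e ∈ S := Submodule.subset_span (by simp)
  have hh : h ∈ S := Submodule.subset_span (by simp)
  have hf : f ∈ S := Submodule.subset_span (by simp)
  -- membership of the three key brackets
  have m1 : br (-(2 * X)) (-(X ^ 2)) ∈ S := by
    rw [key1]; exact S.add_mem (S.smul_mem _ hh) (S.smul_mem _ hf)
  have m2 : br (-(2 * X)) 1 ∈ S := by
    rw [key2]; exact S.add_mem (S.smul_mem _ he) (S.smul_mem _ hh)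
  have m3 : br 1 (-(X ^ 2)) ∈ S := by
    rw [key3]; exact S.add_mem (S.add_mem (S.smul_mem _ he) (S.smul_mem _ hh)) (S.smul_mem _ hf)
  have base : ∀ x ∈ ({1, -(2 * X), -(X ^ 2)} : Set (Polynomial F)),
      ∀ y ∈ ({1, -(2 * X), -(X ^ 2)} : Set (Polynomial F)), br x y ∈ S := by
    rintro x (rfl | rfl | rfl) y (rfl | rfl | rfl)
    · rw [hself]; exact S.zero_mem
    · rw [hanti]; exact S.neg_mem m2
    · exact m3
    · exact m2
    · rw [hself]; exact S.zero_mem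
    · exact m1
    · rw [hanti]; exact S.neg_mem m3
    · rw [hanti]; exact S.neg_mem m1
    · rw [hself]; exact S.zero_mem
  have haddr : ∀ a b b', br a (b + b') = br a b + br a b' := by
    intro a b b'
    rw [hanti, hadd, hanti a b, hanti a b']; abel
  have hsmulr : ∀ (c : F) a b, br a (c • b) = c • br a b := by
    intro c a b
    rw [hanti, hsmul, hanti a b]; simp
  induction ha using Submodule.span_induction with
  | mem x hx =>
    induction hb using Submodule.span_induction with
    | mem y hy => exact base x hx y hy
    | zero =>
      have : br x 0 = 0 := by
        have := haddr x 0 0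
        simpa using this
      rw [this]; exact S.zero_mem
    | add y z _ _ iy iz => rw [haddr]; exact S.add_mem iy iz
    | smul c y _ iy => rw [hsmulr]; exact S.smul_mem _ iy
  | zero =>
    have : br 0 b = 0 := by
      have := hadd 0 0 b
      simpa using this
    rw [this]; exact S.zero_mem
  | add y z hy hz iy iz => rw [hadd]; exact S.add_mem iy iz
  | smul c y hy iy => rw [hsmul]; exact S.smul_mem _ iy
end

section
/- Let F be a field of characteristic zero, p₀, p₁ ∈ F, σ the F-algebra endomorphism of F[t] with σ(t) = 0, and ∂ a σ-derivation on F[t] with ∂(t) = p₀ + p₁t. Set e := ∂, h := −2t·∂, f := −t²·∂ as operators on F[t] and define the bracket ⟨a·∂, b·∂⟩ := (σ(a)∂(b) − σ(b)∂(a))·∂. Then ⟨h,f⟩ = 0, ⟨h,e⟩ = 2p₀·e − p₁·h, and ⟨e,f⟩ = (p₀/2)·h + p₁·f. -/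
open Polynomial in
/-- Case 3: `σ(t) = 0`, `D(t) = p₀ + p₁t` on `F[t]`. With `e := D`,
`h := −2t·D`, `f := −t²·D` and bracket `⟨a·D, b·D⟩ := (σ(a)D(b) − σ(b)D(a))·D`, one has
`⟨h,f⟩ = 0`, `⟨h,e⟩ = 2p₀·e − p₁·h`, and `⟨e,f⟩ = (p₀/2)·h + p₁·f`. -/
theorem case3_bracket_relations
    (F : Type*) [Field F] [CharZero F] (p₀ p₁ : F)
    (σ : Polynomial F →ₐ[F] Polynomial F)
    (D : Polynomial F →ₗ[F] Polynomial F)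
    (hLeib : ∀ a b : Polynomial F, D (a * b) = D a * b + σ a * D b)
    (hσ : σ X = 0)
    (hD : D X = C p₀ + C p₁ * X) :
    let e : Polynomial F →ₗ[F] Polynomial F := D
    let h : Polynomial F →ₗ[F] Polynomial F := (LinearMap.mulLeft F (-(2 * X))).comp D
    let f : Polynomial F →ₗ[F] Polynomial F :=
      (LinearMap.mulLeft F (-(X ^ 2 : Polynomial F))).comp D
    let br : Polynomial F → Polynomial F → (Polynomial F →ₗ[F] Polynomial F) :=
      fun a b => (LinearMap.mulLeft F (σ a * D b - σ b * D a)).comp D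
    br (-(2 * X)) (-(X ^ 2)) = 0 ∧
    br (-(2 * X)) 1 = (2 * p₀) • e + (-p₁) • h ∧
    br 1 (-(X ^ 2)) = (p₀ / 2) • h + p₁ • f := by
  intro e h f br
  have hD1 : D 1 = 0 := by
    have h1 := hLeib 1 1
    simp only [mul_one, map_one, one_mul] at h1
    have : D 1 + D 1 - D 1 = D 1 - D 1 := by rw [← h1]
    simpa using this
  have hC2 : (C (2:F) : Polynomial F) = 2 := map_ofNat C 2
  have hσ2X : σ (-(2 * X)) = 0 := by
    simp [map_neg, map_mul, hσ]
  have hσX2 : σ (-(X ^ 2)) = 0 := by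
    simp [map_neg, map_pow, hσ]
  have hD2X : D (-(2 * X)) = -(2 * (C p₀ + C p₁ * X)) := by
    have e1 : (-(2 * X) : Polynomial F) = (-2 : F) • X := by
      rw [Polynomial.smul_eq_C_mul]; simp only [C_neg, hC2]; ring
    rw [e1, map_smul, hD, Polynomial.smul_eq_C_mul]
    simp only [C_neg, hC2]; ring
  have hDX2 : D (-(X ^ 2)) = -((C p₀ + C p₁ * X) * X) := by
    have h1 := hLeib X X
    rw [hσ, hD] at h1
    have e1 : (-(X ^ 2) : Polynomial F) = (-1 : F) • (X * X) := by
      rw [Polynomial.smul_eq_C_mul]; simp only [C_neg, C_1]; ring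
    rw [e1, map_smul, h1, Polynomial.smul_eq_C_mul]
    simp only [C_neg, C_1]; ring
  refine ⟨?_, ?_, ?_⟩
  · refine LinearMap.ext fun c => ?_
    simp [br, hσ2X, hσX2]
  · refine LinearMap.ext fun c => ?_
    simp only [br, e, h, LinearMap.comp_apply, LinearMap.mulLeft_apply,
      LinearMap.add_apply, LinearMap.smul_apply, hσ2X, map_one, hD1, hD2X,
      Polynomial.smul_eq_C_mul, C_neg, C_mul, hC2]
    ring
  · refine LinearMap.ext fun c => ?_
    simp only [br, h, f, LinearMap.comp_apply, LinearMap.mulLeft_apply,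
      LinearMap.add_apply, LinearMap.smul_apply, map_one, hD1, hDX2, hσX2,
      Polynomial.smul_eq_C_mul, C_neg, C_mul]
    have hdiv : (C (p₀ / 2) : Polynomial F) * 2 = C p₀ := by
      rw [← hC2, ← C_mul, div_mul_cancel₀]
      exact two_ne_zero
    linear_combination (X * D c) * hdiv
end

section
/- Let F be a field of characteristic zero and q ∈ F with q ≠ 0. Let L be the 3-dimensional F-vector space with basis {e, f, h}, equipped with the unique skew-symmetric bilinear bracket ⟨·,·⟩ : L × L → L satisfying ⟨h,f⟩ = −2q·f, ⟨h,e⟩ = 2e, ⟨e,f⟩ = ((q+1)/2)·h, and let α : L → L be the linear map with α(e) = q⁻¹e, α(h) = h, α(f) = q·f. Then (L, α, ⟨·,·⟩) is a hom-Lie algebra: for all x, y, z ∈ L, ⟨(α+id)(x), ⟨y,z⟩⟩ + ⟨(α+id)(y), ⟨z,x⟩⟩ + ⟨(α+id)(z), ⟨x,y⟩⟩ = 0. (This algebra is the 'Jackson sl₂', denoted q-sl₂.) -/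
set_option maxHeartbeats 1000000 in
private lemma basis_decomp_aux (F : Type*) [Field F] (v : Fin 3 → F) :
    v = v 0 • ![(1:F),0,0] + v 1 • ![0,1,0] + v 2 • ![0,0,1] := by
  funext i; fin_cases i <;> simp

set_option maxHeartbeats 2000000 in
/-- the "Jackson `sl₂`" `q`-sl₂ is a hom-Lie algebra. On the 3-dimensional
space `L = Fin 3 → F` with basis `e, f, h`, the unique skew-symmetric bilinear bracket with
`⟨h,f⟩ = −2q·f`, `⟨h,e⟩ = 2e`, `⟨e,f⟩ = ((q+1)/2)·h`, together with the linear map `α` with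
`α(e) = q⁻¹e`, `α(h) = h`, `α(f) = q·f`, satisfies the hom-Lie Jacobi identity
`↺_{x,y,z} ⟨(α+id)(x), ⟨y,z⟩⟩ = 0`. -/
theorem jackson_sl2_homLie
    (F : Type*) [Field F] [CharZero F] (q : F) (hq : q ≠ 0)
    (B : (Fin 3 → F) →ₗ[F] (Fin 3 → F) →ₗ[F] (Fin 3 → F))
    (α : (Fin 3 → F) →ₗ[F] (Fin 3 → F))
    (e f h : Fin 3 → F)
    (he : e = ![1, 0, 0]) (hf : f = ![0, 1, 0]) (hh : h = ![0, 0, 1])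
    (hskew : ∀ x y : Fin 3 → F, B x y = -B y x)
    (hBhf : B h f = (-(2 * q)) • f)
    (hBhe : B h e = (2 : F) • e)
    (hBef : B e f = ((q + 1) / 2) • h)
    (hαe : α e = q⁻¹ • e)
    (hαh : α h = h)
    (hαf : α f = q • f) :
    ∀ x y z : Fin 3 → F,
      B (α x + x) (B y z) + B (α y + y) (B z x) + B (α z + z) (B x y) = 0 := by

  intro x y z
  have hzz : ∀ v : Fin 3 → F, B v v = 0 := by
    intro v
    have h1 := hskew v v
    have h2 : (2 : F) • B v v = 0 := by
      rw [two_smul]; nth_rewrite 2 [h1]; simp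
    rcases smul_eq_zero.mp h2 with h3 | h3
    · exact absurd h3 two_ne_zero
    · exact h3
  have hfe : B f e = -(((q + 1) / 2) • h) := by rw [hskew, hBef]
  have heh : B e h = -((2 : F) • e) := by rw [hskew, hBhe]
  have hfh : B f h = -((-(2 * q)) • f) := by rw [hskew, hBhf]
  obtain ⟨a1, a2, a3, hx⟩ : ∃ a1 a2 a3, x = a1 • e + a2 • f + a3 • h :=
    ⟨x 0, x 1, x 2, by rw [he, hf, hh]; exact basis_decomp_aux F x⟩
  obtain ⟨b1, b2, b3, hy⟩ : ∃ b1 b2 b3, y = b1 • e + b2 • f + b3 • h :=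
    ⟨y 0, y 1, y 2, by rw [he, hf, hh]; exact basis_decomp_aux F y⟩
  obtain ⟨c1, c2, c3, hz⟩ : ∃ c1 c2 c3, z = c1 • e + c2 • f + c3 • h :=
    ⟨z 0, z 1, z 2, by rw [he, hf, hh]; exact basis_decomp_aux F z⟩
  clear he hf hh
  subst hx hy hz
  simp only [map_add, map_smul, map_neg, map_zero, LinearMap.add_apply, LinearMap.smul_apply,
    LinearMap.neg_apply, hαe, hαf, hαh, hBef, hBhe, hBhf, hfe, heh, hfh, hzz,
    smul_add, smul_neg, smul_smul, smul_zero, add_zero, zero_add, neg_neg, neg_zero]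
  match_scalars <;> field_simp <;> ring
end

section
/- Let F be a field of characteristic zero, q ∈ F with q ≠ 0, and p₀ ∈ F. Let U_q be the associative unital F-algebra generated by e, f, h subject to the relations hf − qfh = −2p₀f, he − q⁻¹eh = 2q⁻¹p₀e, ef − q²fe = ((q+1)/2)p₀h (i.e. the quotient of the free associative algebra F{e,f,h} by the two-sided ideal generated by these three elements). Let Ω_q := ef + qfe + ((q+1)/4)h² in U_q. Then Ω_q is normal: Ω_q·e = q⁻²e·Ω_q, Ω_q·h = h·Ω_q, and Ω_q·f = q²f·Ω_q hold in U_q. -/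
set_option maxHeartbeats 2000000


/-- The defining relations of `U_q`: on the free algebra on generators
`0 ↦ e`, `1 ↦ f`, `2 ↦ h`, we impose `hf − qfh = −2p₀f`, `he − q⁻¹eh = 2q⁻¹p₀e`,
`ef − q²fe = ((q+1)/2)p₀h`. -/
inductive UqRel (F : Type*) [Field F] (q p₀ : F) :
    FreeAlgebra F (Fin 3) → FreeAlgebra F (Fin 3) → Prop
  | hf : UqRel F q p₀
      (FreeAlgebra.ι F (2 : Fin 3) * FreeAlgebra.ι F (1 : Fin 3)
        - q • (FreeAlgebra.ι F (1 : Fin 3) * FreeAlgebra.ι F (2 : Fin 3)))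
      ((-(2 * p₀)) • FreeAlgebra.ι F (1 : Fin 3))
  | he : UqRel F q p₀
      (FreeAlgebra.ι F (2 : Fin 3) * FreeAlgebra.ι F (0 : Fin 3)
        - q⁻¹ • (FreeAlgebra.ι F (0 : Fin 3) * FreeAlgebra.ι F (2 : Fin 3)))
      ((2 * q⁻¹ * p₀) • FreeAlgebra.ι F (0 : Fin 3))
  | ef : UqRel F q p₀
      (FreeAlgebra.ι F (0 : Fin 3) * FreeAlgebra.ι F (1 : Fin 3)
        - q ^ 2 • (FreeAlgebra.ι F (1 : Fin 3) * FreeAlgebra.ι F (0 : Fin 3)))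
      (((q + 1) / 2 * p₀) • FreeAlgebra.ι F (2 : Fin 3))

/-- the Casimir-like element `Ω_q = ef + qfe + ((q+1)/4)h²` of `U_q` is
normal: `Ω_q·e = q⁻²e·Ω_q`, `Ω_q·h = h·Ω_q`, `Ω_q·f = q²f·Ω_q`. -/
theorem casimir_normal
    (F : Type*) [Field F] [CharZero F] (q p₀ : F) (hq : q ≠ 0) :
    let e : RingQuot (UqRel F q p₀) :=
      RingQuot.mkAlgHom F (UqRel F q p₀) (FreeAlgebra.ι F (0 : Fin 3))
    let f : RingQuot (UqRel F q p₀) :=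
      RingQuot.mkAlgHom F (UqRel F q p₀) (FreeAlgebra.ι F (1 : Fin 3))
    let h : RingQuot (UqRel F q p₀) :=
      RingQuot.mkAlgHom F (UqRel F q p₀) (FreeAlgebra.ι F (2 : Fin 3))
    let Ω : RingQuot (UqRel F q p₀) := e * f + q • (f * e) + ((q + 1) / 4) • (h * h)
    Ω * e = q⁻¹ ^ 2 • (e * Ω) ∧ Ω * h = h * Ω ∧ Ω * f = q ^ 2 • (f * Ω) := by
  intro e f h Ω
  have r1 : h * f = q • (f * h) + (-(2 * p₀)) • f := by
    have := RingQuot.mkAlgHom_rel F (UqRel.hf (F := F) (q := q) (p₀ := p₀))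
    simp only [map_sub, map_mul, map_smul] at this
    rw [sub_eq_iff_eq_add] at this
    rw [this]; abel
  have r2 : h * e = q⁻¹ • (e * h) + (2 * q⁻¹ * p₀) • e := by
    have := RingQuot.mkAlgHom_rel F (UqRel.he (F := F) (q := q) (p₀ := p₀))
    simp only [map_sub, map_mul, map_smul] at this
    rw [sub_eq_iff_eq_add] at this
    rw [this]; abel
  have r3 : e * f = q ^ 2 • (f * e) + ((q + 1) / 2 * p₀) • h := by
    have := RingQuot.mkAlgHom_rel F (UqRel.ef (F := F) (q := q) (p₀ := p₀))
    simp only [map_sub, map_mul, map_smul] at this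
    rw [sub_eq_iff_eq_add] at this
    rw [this]; abel
  -- inverse-free reorientation of r2 : e*h = q•(h*e) − 2p₀•e
  have r2' : e * h = q • (h * e) + (-(2 * p₀)) • e := by
    have hc : q * (2 * q⁻¹ * p₀) = 2 * p₀ := by field_simp
    have h2 : q • (h * e) = e * h + (2 * p₀) • e := by
      rw [r2, smul_add, smul_smul, smul_smul, mul_inv_cancel₀ hq, one_smul, hc]
    rw [h2]; module
  have R1 : ∀ x, h * (f * x) = q • (f * (h * x)) + (-(2 * p₀)) • (f * x) := by
    intro x
    rw [← mul_assoc, r1, add_mul, smul_mul_assoc, smul_mul_assoc, mul_assoc]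
  have R2 : ∀ x, e * (h * x) = q • (h * (e * x)) + (-(2 * p₀)) • (e * x) := by
    intro x
    rw [← mul_assoc, r2', add_mul, smul_mul_assoc, smul_mul_assoc, mul_assoc]
  have R3 : ∀ x, e * (f * x) = q ^ 2 • (f * (e * x)) + ((q + 1) / 2 * p₀) • (h * x) := by
    intro x
    rw [← mul_assoc, r3, add_mul, smul_mul_assoc, smul_mul_assoc, mul_assoc]
  refine ⟨?_, ?_, ?_⟩
  · show Ω * e = q⁻¹ ^ 2 • (e * Ω)
    rw [inv_pow, eq_comm, inv_smul_eq_iff₀ (pow_ne_zero 2 hq)]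
    simp only [Ω, mul_add, add_mul, smul_add, smul_mul_assoc, mul_smul_comm, mul_assoc,
      R1, R2, R3, r1, r2', r3, smul_smul]
    all_goals match_scalars <;> ring
  · show Ω * h = h * Ω
    simp only [Ω, mul_add, add_mul, smul_add, smul_mul_assoc, mul_smul_comm, mul_assoc,
      R1, R2, R3, r1, r2', r3, smul_smul]
    all_goals match_scalars <;> ring
  · show Ω * f = q ^ 2 • (f * Ω)
    simp only [Ω, mul_add, add_mul, smul_add, smul_mul_assoc, mul_smul_comm, mul_assoc,
      R1, R2, R3, r1, r2', r3, smul_smul]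
    all_goals match_scalars <;> ring
end

section
/- Let F be a field of characteristic zero and q, p₀ ∈ F with q ≠ 0 and q ≠ 1. Let W_q := F{x,y,z}/(yz − q⁻¹zy, zx − q²xz − p₀²(1+q⁻¹)y − p₀²((q+1)/(q−1))·1, xy − q⁻¹yx). Then W_q has a PBW-basis: the images of the ordered monomials x^i y^j z^k, for (i,j,k) ranging over all triples of non-negative integers, form an F-vector-space basis of W_q. -/
/-!
Spanning: the relations move `y` past `x` and `z` past `y` up to scalars, and `z` past `x` at the
cost of terms of lower `x`-degree, so left multiplication by each generator keeps the span of the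
ordered monomials, which contains `1`.

Independence: `W_q` acts on the free module with basis `e_(i,j,k)` by the operators describing
left multiplication by `x`, `y`, `z` on ordered monomials; the defining relations can be checked
on basis vectors, and `x^i y^j z^k` sends `e_(0,0,0)` to `e_(i,j,k)`.
-/

/-- The defining relations of `W_q`: on the free algebra on generators
`0 ↦ x`, `1 ↦ y`, `2 ↦ z`, we impose `yz = q⁻¹zy`,
`zx = q²xz + p₀²(1+q⁻¹)y + p₀²((q+1)/(q−1))·1`, `xy = q⁻¹yx`. -/
inductive WqRel (F : Type*) [Field F] (q p₀ : F) :
    FreeAlgebra F (Fin 3) → FreeAlgebra F (Fin 3) → Prop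
  | yz : WqRel F q p₀
      (FreeAlgebra.ι F (1 : Fin 3) * FreeAlgebra.ι F (2 : Fin 3))
      (q⁻¹ • (FreeAlgebra.ι F (2 : Fin 3) * FreeAlgebra.ι F (1 : Fin 3)))
  | zx : WqRel F q p₀
      (FreeAlgebra.ι F (2 : Fin 3) * FreeAlgebra.ι F (0 : Fin 3))
      (q ^ 2 • (FreeAlgebra.ι F (0 : Fin 3) * FreeAlgebra.ι F (2 : Fin 3))
        + (p₀ ^ 2 * (1 + q⁻¹)) • FreeAlgebra.ι F (1 : Fin 3)
        + (p₀ ^ 2 * ((q + 1) / (q - 1))) • (1 : FreeAlgebra F (Fin 3)))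
  | xy : WqRel F q p₀
      (FreeAlgebra.ι F (0 : Fin 3) * FreeAlgebra.ι F (1 : Fin 3))
      (q⁻¹ • (FreeAlgebra.ι F (1 : Fin 3) * FreeAlgebra.ι F (0 : Fin 3)))

open Submodule

section OrderedMonomial

variable {R A : Type*} [CommSemiring R] [Semiring A] [Algebra R A]

theorem mul_pow_eq_smul_pow_mul {a b : A} {c : R} (h : b * a = c • (a * b)) (n : ℕ) :
    b * a ^ n = c ^ n • (a ^ n * b) := by
  induction n with
  | zero => simp
  | succ n ih =>
    rw [pow_succ, ← mul_assoc, ih, smul_mul_assoc, mul_assoc, h, mul_smul_comm, smul_smul,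
      ← pow_succ, ← mul_assoc, ← pow_succ]

theorem Submodule.mul_mem_span_of_mul_mem {s : Set A} {g w : A}
    (h : ∀ m ∈ s, g * m ∈ span R s) (hw : w ∈ span R s) : g * w ∈ span R s :=
  (span_le (p := (span R s).comap (LinearMap.mulLeft R g))).mpr h hw

theorem Submodule.span_eq_top_of_mul_mem {s t : Set A} (ht : Algebra.adjoin R t = ⊤)
    (h1 : (1 : A) ∈ span R s) (h : ∀ g ∈ t, ∀ m ∈ s, g * m ∈ span R s) : span R s = ⊤ := by
  have hstable (a : A) (ha : a ∈ Algebra.adjoin R t) : ∀ w ∈ span R s, a * w ∈ span R s := by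
    induction ha using Algebra.adjoin_induction with
    | mem g hg => exact fun w => mul_mem_span_of_mul_mem (h g hg)
    | algebraMap r => intro w hw; rw [← Algebra.smul_def]; exact smul_mem _ r hw
    | add a b _ _ iha ihb => intro w hw; rw [add_mul]; exact add_mem (iha w hw) (ihb w hw)
    | mul a b _ _ iha ihb => intro w hw; rw [mul_assoc]; exact iha _ (ihb w hw)
  refine eq_top_iff.mpr fun a _ => ?_
  simpa using hstable a (ht ▸ Algebra.mem_top) 1 h1

def orderedMonomial (x y z : A) (p : ℕ × ℕ × ℕ) : A := x ^ p.1 * y ^ p.2.1 * z ^ p.2.2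

theorem span_orderedMonomial_eq_top {x y z : A} {a b c d e : R}
    (hyx : y * x = a • (x * y)) (hzy : z * y = b • (y * z))
    (hzx : z * x = c • (x * z) + d • y + e • 1) (hgen : Algebra.adjoin R {x, y, z} = ⊤) :
    span R (Set.range (orderedMonomial x y z)) = ⊤ := by
  set S := span R (Set.range (orderedMonomial x y z))
  have hmem (i j k : ℕ) : x ^ i * y ^ j * z ^ k ∈ S := subset_span ⟨(i, j, k), rfl⟩
  have hx (i j k : ℕ) : x * (x ^ i * y ^ j * z ^ k) ∈ S := by
    simpa only [pow_succ', mul_assoc] using hmem (i + 1) j k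
  have hy (i j k : ℕ) : y * (x ^ i * y ^ j * z ^ k) ∈ S := by
    have : y * (x ^ i * y ^ j * z ^ k) = a ^ i • (x ^ i * y ^ (j + 1) * z ^ k) := by
      rw [← mul_assoc, ← mul_assoc, mul_pow_eq_smul_pow_mul hyx, smul_mul_assoc,
        smul_mul_assoc, mul_assoc (x ^ i), ← pow_succ']
    exact this ▸ smul_mem _ _ (hmem i (j + 1) k)
  have hxS {w : A} : w ∈ S → x * w ∈ S :=
    mul_mem_span_of_mul_mem (by rintro _ ⟨⟨i, j, k⟩, rfl⟩; exact hx i j k)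
  have hz (i j k : ℕ) : z * (x ^ i * y ^ j * z ^ k) ∈ S := by
    induction i generalizing j k with
    | zero =>
      have : z * (x ^ 0 * y ^ j * z ^ k) = b ^ j • (x ^ 0 * y ^ j * z ^ (k + 1)) := by
        rw [pow_zero, one_mul, ← mul_assoc, mul_pow_eq_smul_pow_mul hzy,
          smul_mul_assoc, mul_assoc, ← pow_succ']
      exact this ▸ smul_mem _ _ (hmem 0 j (k + 1))
    | succ i ih =>
      have : z * (x ^ (i + 1) * y ^ j * z ^ k) = c • (x * (z * (x ^ i * y ^ j * z ^ k)))
          + d • (y * (x ^ i * y ^ j * z ^ k)) + e • (x ^ i * y ^ j * z ^ k) := by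
        rw [pow_succ', mul_assoc x, mul_assoc x, ← mul_assoc z, hzx]
        simp only [add_mul, smul_mul_assoc, one_mul, mul_assoc]
      rw [this]
      exact add_mem (add_mem (smul_mem _ _ (hxS (ih j k))) (smul_mem _ _ (hy i j k)))
        (smul_mem _ _ (hmem i j k))
  refine span_eq_top_of_mul_mem hgen (by simpa using hmem 0 0 0) ?_
  rintro g hg _ ⟨⟨i, j, k⟩, rfl⟩
  rcases hg with rfl | rfl | rfl
  exacts [hx i j k, hy i j k, hz i j k]

end OrderedMonomial

namespace Wq

open Finsupp

variable {F : Type*} [Field F] (q p₀ : F)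

noncomputable abbrev gen (i : Fin 3) : RingQuot (WqRel F q p₀) :=
  RingQuot.mkAlgHom F (WqRel F q p₀) (FreeAlgebra.ι F i)

theorem gen_one_mul_gen_zero (hq0 : q ≠ 0) :
    gen q p₀ 1 * gen q p₀ 0 = q • (gen q p₀ 0 * gen q p₀ 1) := by
  have h := RingQuot.mkAlgHom_rel F (WqRel.xy (F := F) (q := q) (p₀ := p₀))
  rw [map_mul, map_smul, map_mul] at h
  rw [h, smul_inv_smul₀ hq0]

theorem gen_two_mul_gen_one (hq0 : q ≠ 0) :
    gen q p₀ 2 * gen q p₀ 1 = q • (gen q p₀ 1 * gen q p₀ 2) := by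
  have h := RingQuot.mkAlgHom_rel F (WqRel.yz (F := F) (q := q) (p₀ := p₀))
  rw [map_mul, map_smul, map_mul] at h
  rw [h, smul_inv_smul₀ hq0]

theorem gen_two_mul_gen_zero : gen q p₀ 2 * gen q p₀ 0 = q ^ 2 • (gen q p₀ 0 * gen q p₀ 2)
    + (p₀ ^ 2 * (1 + q⁻¹)) • gen q p₀ 1 + (p₀ ^ 2 * ((q + 1) / (q - 1))) • 1 := by
  simpa using RingQuot.mkAlgHom_rel F (WqRel.zx (F := F) (q := q) (p₀ := p₀))

theorem adjoin_gen_eq_top : Algebra.adjoin F {gen q p₀ 0, gen q p₀ 1, gen q p₀ 2} = ⊤ := by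
  rw [eq_top_iff, ← (AlgHom.range_eq_top _).mpr (RingQuot.mkAlgHom_surjective F (WqRel F q p₀)),
    ← Algebra.map_top, ← FreeAlgebra.adjoin_range_ι, AlgHom.map_adjoin]
  refine Algebra.adjoin_mono ?_
  rintro _ ⟨_, ⟨i, rfl⟩, rfl⟩
  fin_cases i <;> simp

/-- In `W_q`, `z x^i = q^(2i) x^i z + B_i x^(i-1) y + C_i x^(i-1)`; the recursions for `B_i` and
`C_i` come from `z x^(i+1) = (z x) x^i`. -/
noncomputable def coeffB : ℕ → F
  | 0 => 0
  | i + 1 => q ^ 2 * coeffB i + p₀ ^ 2 * (1 + q⁻¹) * q ^ i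

noncomputable def coeffC : ℕ → F
  | 0 => 0
  | i + 1 => q ^ 2 * coeffC i + p₀ ^ 2 * ((q + 1) / (q - 1))

/-- `opX`, `opY`, `opZ` are left multiplication by `x`, `y`, `z` on the ordered monomials
`x^i y^j z^k ↔ single (i, j, k) 1`, rewritten in ordered form. -/
noncomputable def opX : Module.End F ((ℕ × ℕ × ℕ) →₀ F) :=
  linearCombination F fun p => single (p.1 + 1, p.2.1, p.2.2) 1

noncomputable def opY : Module.End F ((ℕ × ℕ × ℕ) →₀ F) :=
  linearCombination F fun p => q ^ p.1 • single (p.1, p.2.1 + 1, p.2.2) 1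

/-- The truncated `i - 1` is harmless since `B_0 = C_0 = 0`. -/
noncomputable def opZ : Module.End F ((ℕ × ℕ × ℕ) →₀ F) :=
  linearCombination F fun p =>
    q ^ (2 * p.1 + p.2.1) • single (p.1, p.2.1, p.2.2 + 1) 1
      + coeffB q p₀ p.1 • single (p.1 - 1, p.2.1 + 1, p.2.2) 1
      + coeffC q p₀ p.1 • single (p.1 - 1, p.2.1, p.2.2) 1

@[simp] theorem opX_single (i j k : ℕ) :
    opX (single (i, j, k) (1 : F)) = single (i + 1, j, k) 1 := by
  simp [opX]

@[simp] theorem opY_single (i j k : ℕ) :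
    opY q (single (i, j, k) 1) = q ^ i • single (i, j + 1, k) 1 := by
  simp [opY]

@[simp] theorem opZ_single (i j k : ℕ) :
    opZ q p₀ (single (i, j, k) 1) = q ^ (2 * i + j) • single (i, j, k + 1) 1
      + coeffB q p₀ i • single (i - 1, j + 1, k) 1 + coeffC q p₀ i • single (i - 1, j, k) 1 := by
  simp [opZ]

theorem opX_mul_opY (hq0 : q ≠ 0) : opX * opY q = q⁻¹ • (opY q * opX) := by
  rw [eq_inv_smul_iff₀ hq0]
  ext ⟨i, j, k⟩ : 2
  simp only [LinearMap.comp_apply, lsingle_apply, Module.End.mul_apply, LinearMap.smul_apply,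
    opX_single, opY_single, map_smul, smul_smul]
  module

theorem opY_mul_opZ (hq0 : q ≠ 0) : opY q * opZ q p₀ = q⁻¹ • (opZ q p₀ * opY q) := by
  rw [eq_inv_smul_iff₀ hq0]
  ext ⟨_ | i, j, k⟩ : 2 <;>
  simp only [LinearMap.comp_apply, lsingle_apply, Module.End.mul_apply, LinearMap.smul_apply,
    opY_single, opZ_single, map_add, map_smul, smul_smul, smul_add, coeffB, coeffC,
    Nat.add_sub_cancel, mul_zero, zero_smul, add_zero] <;>
  module

theorem opZ_mul_opX : opZ q p₀ * opX = q ^ 2 • (opX * opZ q p₀)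
    + (p₀ ^ 2 * (1 + q⁻¹)) • opY q + (p₀ ^ 2 * ((q + 1) / (q - 1))) • 1 := by
  ext ⟨_ | i, j, k⟩ : 2 <;>
  simp only [LinearMap.comp_apply, lsingle_apply, Module.End.mul_apply, LinearMap.smul_apply,
    LinearMap.add_apply, Module.End.one_apply, opX_single, opY_single, opZ_single, map_add,
    map_smul, smul_smul, smul_add, coeffB, coeffC, Nat.add_sub_cancel, mul_zero, zero_smul,
    add_zero] <;>
  module

noncomputable def pbwRep (hq0 : q ≠ 0) :
    RingQuot (WqRel F q p₀) →ₐ[F] Module.End F ((ℕ × ℕ × ℕ) →₀ F) :=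
  RingQuot.liftAlgHom F ⟨FreeAlgebra.lift F ![opX, opY q, opZ q p₀], by
    rintro _ _ ⟨⟩ <;> simp [opX_mul_opY, opY_mul_opZ, opZ_mul_opX, hq0]⟩

theorem pbwRep_gen (hq0 : q ≠ 0) (i : Fin 3) :
    pbwRep q p₀ hq0 (gen q p₀ i) = ![opX, opY q, opZ q p₀] i := by
  simp [pbwRep]

theorem opZ_pow_single (k : ℕ) :
    (opZ q p₀ ^ k) (single (0, 0, 0) 1) = single (0, 0, k) 1 := by
  induction k with
  | zero => simp
  | succ k ih => simp [pow_succ', ih, coeffB, coeffC]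

theorem opY_pow_single (j k : ℕ) :
    (opY q ^ j) (single (0, 0, k) 1) = single (0, j, k) 1 := by
  induction j with
  | zero => simp
  | succ j ih => simp [pow_succ', ih]

theorem opX_pow_single (i j k : ℕ) :
    (opX ^ i) (single (0, j, k) 1) = single (i, j, k) (1 : F) := by
  induction i with
  | zero => simp
  | succ i ih => simp [pow_succ', ih]

theorem pbwRep_orderedMonomial (hq0 : q ≠ 0) (p : ℕ × ℕ × ℕ) :
    pbwRep q p₀ hq0 (orderedMonomial (gen q p₀ 0) (gen q p₀ 1) (gen q p₀ 2) p)
      (single (0, 0, 0) 1) = single p 1 := by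
  obtain ⟨i, j, k⟩ := p
  simp [orderedMonomial, pbwRep_gen, opZ_pow_single, opY_pow_single, opX_pow_single]

theorem linearIndependent_orderedMonomial (hq0 : q ≠ 0) :
    LinearIndependent F (orderedMonomial (gen q p₀ 0) (gen q p₀ 1) (gen q p₀ 2)) := by
  refine LinearIndependent.of_comp
    ((LinearMap.applyₗ (single (0, 0, 0) 1)).comp (pbwRep q p₀ hq0).toLinearMap) ?_
  convert linearIndependent_single_one F (ℕ × ℕ × ℕ) with p
  exact pbwRep_orderedMonomial q p₀ hq0 p

end Wq

theorem Wq_PBW_basis_general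
    (F : Type*) [Field F] (q p₀ : F) (hq0 : q ≠ 0) :
    let x : RingQuot (WqRel F q p₀) :=
      RingQuot.mkAlgHom F (WqRel F q p₀) (FreeAlgebra.ι F (0 : Fin 3))
    let y : RingQuot (WqRel F q p₀) :=
      RingQuot.mkAlgHom F (WqRel F q p₀) (FreeAlgebra.ι F (1 : Fin 3))
    let z : RingQuot (WqRel F q p₀) :=
      RingQuot.mkAlgHom F (WqRel F q p₀) (FreeAlgebra.ι F (2 : Fin 3))
    LinearIndependent F
      (fun p : ℕ × ℕ × ℕ => x ^ p.1 * y ^ p.2.1 * z ^ p.2.2) ∧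
    Submodule.span F
      (Set.range fun p : ℕ × ℕ × ℕ => x ^ p.1 * y ^ p.2.1 * z ^ p.2.2) = ⊤ :=
  ⟨Wq.linearIndependent_orderedMonomial q p₀ hq0,
    span_orderedMonomial_eq_top (Wq.gen_one_mul_gen_zero q p₀ hq0)
      (Wq.gen_two_mul_gen_one q p₀ hq0) (Wq.gen_two_mul_gen_zero q p₀) (Wq.adjoin_gen_eq_top q p₀)⟩

/-- `W_q` has a PBW-basis: the ordered monomials `x^i y^j z^k` form an
`F`-vector-space basis of `W_q` (they are linearly independent and span). -/
theorem Wq_PBW_basis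
    (F : Type*) [Field F] [CharZero F] (q p₀ : F) (hq0 : q ≠ 0) (hq1 : q ≠ 1) :
    let x : RingQuot (WqRel F q p₀) :=
      RingQuot.mkAlgHom F (WqRel F q p₀) (FreeAlgebra.ι F (0 : Fin 3))
    let y : RingQuot (WqRel F q p₀) :=
      RingQuot.mkAlgHom F (WqRel F q p₀) (FreeAlgebra.ι F (1 : Fin 3))
    let z : RingQuot (WqRel F q p₀) :=
      RingQuot.mkAlgHom F (WqRel F q p₀) (FreeAlgebra.ι F (2 : Fin 3))
    LinearIndependent F
      (fun p : ℕ × ℕ × ℕ => x ^ p.1 * y ^ p.2.1 * z ^ p.2.2) ∧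
    Submodule.span F
      (Set.range fun p : ℕ × ℕ × ℕ => x ^ p.1 * y ^ p.2.1 * z ^ p.2.2) = ⊤ :=
  Wq_PBW_basis_general F q p₀ hq0
end

section
/- Let F be a field of characteristic zero, A := F[X]/(X³) with t the image of X, q₁, q₂, p₀, p₁, p₂ ∈ F, σ an F-algebra endomorphism of A with σ(t) = q₁t + q₂t², and ∂ a σ-derivation on A with ∂(t) = p₀ + p₁t + p₂t². Set e := ∂, h := −2t·∂, f := −t²·∂ as F-linear operators on A and define the bracket ⟨a·∂, b·∂⟩ := (σ(a)∂(b) − σ(b)∂(a))·∂. Then ⟨h,f⟩ = −2q₁p₀·f, ⟨h,e⟩ = 2p₀·e − p₁·h − 2p₂·f, and ⟨e,f⟩ = (p₁ + q₁p₁ + q₂p₀)·f + ((q₁+1)/2)p₀·h. -/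
/-- The truncated polynomial algebra `F[X]/(X³)`. -/
abbrev TruncPoly3 (F : Type*) [Field F] : Type _ :=
  Polynomial F ⧸ Ideal.span ({(Polynomial.X : Polynomial F) ^ 3} : Set (Polynomial F))

/-- The image `t` of `X` in `F[X]/(X³)`. -/
noncomputable abbrev tGen3 (F : Type*) [Field F] : TruncPoly3 F :=
  Ideal.Quotient.mk _ Polynomial.X

set_option maxHeartbeats 2000000 in
/-- on `A = F[X]/(X³)`, for `σ` with `σ(t) = q₁t + q₂t²` and a `σ`-derivation
`D` with `D(t) = p₀ + p₁t + p₂t²`, the operators `e := D`, `h := −2t·D`, `f := −t²·D` and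
bracket `⟨a·D, b·D⟩ := (σ(a)D(b) − σ(b)D(a))·D` satisfy `⟨h,f⟩ = −2q₁p₀·f`,
`⟨h,e⟩ = 2p₀·e − p₁·h − 2p₂·f`, and `⟨e,f⟩ = (p₁ + q₁p₁ + q₂p₀)·f + ((q₁+1)/2)p₀·h`. -/
theorem trunc3_bracket_relations
    (F : Type*) [Field F] [CharZero F] (q₁ q₂ p₀ p₁ p₂ : F)
    (σ : TruncPoly3 F →ₐ[F] TruncPoly3 F)
    (D : TruncPoly3 F →ₗ[F] TruncPoly3 F)
    (hLeib : ∀ a b : TruncPoly3 F, D (a * b) = D a * b + σ a * D b)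
    (hσ : σ (tGen3 F) = q₁ • tGen3 F + q₂ • (tGen3 F) ^ 2)
    (hD : D (tGen3 F) = algebraMap F (TruncPoly3 F) p₀ + p₁ • tGen3 F + p₂ • (tGen3 F) ^ 2) :
    let e : TruncPoly3 F →ₗ[F] TruncPoly3 F := D
    let h : TruncPoly3 F →ₗ[F] TruncPoly3 F :=
      (LinearMap.mulLeft F (-(2 * tGen3 F))).comp D
    let f : TruncPoly3 F →ₗ[F] TruncPoly3 F :=
      (LinearMap.mulLeft F (-(tGen3 F ^ 2))).comp D
    let br : TruncPoly3 F → TruncPoly3 F → (TruncPoly3 F →ₗ[F] TruncPoly3 F) :=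
      fun a b => (LinearMap.mulLeft F (σ a * D b - σ b * D a)).comp D
    br (-(2 * tGen3 F)) (-(tGen3 F ^ 2)) = (-(2 * q₁ * p₀)) • f ∧
    br (-(2 * tGen3 F)) 1 = (2 * p₀) • e + (-p₁) • h + (-(2 * p₂)) • f ∧
    br 1 (-(tGen3 F ^ 2)) = (p₁ + q₁ * p₁ + q₂ * p₀) • f + ((q₁ + 1) / 2 * p₀) • h := by
  intro e h f br
  set t : TruncPoly3 F := tGen3 F with hts
  have hsm : ∀ (c : F) (x : TruncPoly3 F), c • x = algebraMap F (TruncPoly3 F) c * x :=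
    fun c x => Algebra.smul_def c x
  have ht3 : t ^ 3 = 0 := by
    show Ideal.Quotient.mk _ Polynomial.X ^ 3 = 0
    rw [← map_pow, Ideal.Quotient.eq_zero_iff_mem]
    exact Ideal.subset_span rfl
  have ht4 : t ^ 4 = 0 := by rw [pow_succ, ht3, zero_mul]
  have ht5 : t ^ 5 = 0 := by rw [pow_succ, ht4, zero_mul]
  have ht6 : t ^ 6 = 0 := by rw [pow_succ, ht5, zero_mul]
  have hD1 : D 1 = 0 := by
    have h1 := hLeib 1 1
    simp only [mul_one, one_mul, map_one] at h1
    exact (left_eq_add.mp h1)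
  have hDt2 : D (t ^ 2) = ((1 + q₁) * p₀) • t + (p₁ + q₁ * p₁ + q₂ * p₀) • t ^ 2 := by
    have h2 := hLeib t t
    rw [← pow_two] at h2
    rw [h2, hD, hσ]
    simp only [hsm]
    ring_nf
    simp only [ht3, ht4, mul_zero, zero_mul, add_zero, zero_add]
    simp only [map_add, map_mul]
    ring
  have h2t : (-(2 * t) : TruncPoly3 F) = (-2 : F) • t := by
    rw [hsm, map_neg, map_ofNat]
    ring
  have hD2t : D (-(2 * t)) = (-2 : F) • D t := by rw [h2t, map_smul]
  have hσ2t : σ (-(2 * t)) = (-2 : F) • σ t := by rw [h2t, map_smul]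
  have hDnt2 : D (-(t ^ 2)) = -D (t ^ 2) := map_neg D _
  have hσnt2 : σ (-(t ^ 2)) = -(σ t) ^ 2 := by rw [map_neg, map_pow]
  refine ⟨?_, ?_, ?_⟩
  · apply LinearMap.ext
    intro x
    simp only [br, f, LinearMap.comp_apply, LinearMap.mulLeft_apply, LinearMap.smul_apply]
    rw [hD2t, hσ2t, hDnt2, hσnt2, hDt2, hD, hσ]
    simp only [hsm, map_neg, map_ofNat, map_mul, map_add, map_one]
    ring_nf
    simp only [ht3, ht4, ht5, ht6, mul_zero, zero_mul, add_zero, zero_add]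
    try ring
  · apply LinearMap.ext
    intro x
    simp only [br, e, h, f, LinearMap.comp_apply, LinearMap.mulLeft_apply, LinearMap.smul_apply,
      LinearMap.add_apply]
    rw [hD2t, hσ2t, hD1, map_one σ, hD, hσ]
    simp only [hsm, map_neg, map_ofNat, map_mul, map_add, map_one]
    ring_nf
    try simp only [ht3, ht4, ht5, ht6, mul_zero, zero_mul, add_zero, zero_add]
    try ring
  · apply LinearMap.ext
    intro x
    simp only [br, f, h, LinearMap.comp_apply, LinearMap.mulLeft_apply, LinearMap.smul_apply,
      LinearMap.add_apply]
    have h2ne : (algebraMap F (TruncPoly3 F)) ((q₁ + 1) / 2 * p₀) * 2 =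
        algebraMap F (TruncPoly3 F) ((q₁ + 1) * p₀) := by
      rw [← map_ofNat (algebraMap F (TruncPoly3 F)) 2, ← map_mul]
      congr 1
      field_simp
    have hco : ((q₁ + 1) / 2 * p₀) • (-(2 * t) * D x) =
        (-((q₁ + 1) * p₀)) • (t * D x) := by
      rw [hsm, hsm, map_neg]
      linear_combination (-(t * D x)) * h2ne
    rw [hDnt2, hσnt2, hD1, map_one σ, hDt2, hσ, hco]
    simp only [hsm, map_neg, map_ofNat, map_mul, map_add, map_one]
    ring_nf
    try simp only [ht3, ht4, ht5, ht6, mul_zero, zero_mul, add_zero, zero_add]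
    try ring
end

section
/- Let F be a field of characteristic zero, N ≥ 3 an integer, and A := F[X]/(X^N) with t the image of X. Let q₁, q₂ ∈ F, let σ be an F-algebra endomorphism of A with σ(t) = q₁t + q₂t², and let ∂ be a σ-derivation on A whose value ∂(t), written in the basis {1, t, ..., t^{N−1}}, has constant coefficient p₀. If p₀ ≠ 0, then 1 + q₁ + q₁² + ... + q₁^{N−1} = 0; equivalently, {N}_{q₁} = 0, so q₁ is an N-th root of unity different from 1 (the deformation is 'generated at roots of unity'). This follows from 0 = ∂(t^N) = (Σ_{j=0}^{N−1} σ(t)^j t^{N−j−1})·∂(t) = p₀·{N}_{q₁}·t^{N−1} in A. -/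
/-- The truncated polynomial algebra `F[X]/(X^N)`. -/
abbrev TruncPolyN (F : Type*) [Field F] (N : ℕ) : Type _ :=
  Polynomial F ⧸ Ideal.span ({(Polynomial.X : Polynomial F) ^ N} : Set (Polynomial F))

/-- The image `t` of `X` in `F[X]/(X^N)`. -/
noncomputable abbrev tGenN (F : Type*) [Field F] (N : ℕ) : TruncPolyN F N :=
  Ideal.Quotient.mk _ Polynomial.X

set_option maxHeartbeats 1600000

/-- deformations at `N`-th roots of unity: on `A = F[X]/(X^N)` with `N ≥ 3`,
if `σ(t) = q₁t + q₂t²`, `D` is a `σ`-derivation whose value `D(t) = Σ_{i<N} cᵢ tⁱ` has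
constant coefficient `c₀ = p₀ ≠ 0`, then `{N}_{q₁} = 1 + q₁ + ⋯ + q₁^{N−1} = 0`, so `q₁` is
an `N`-th root of unity different from `1`. -/
theorem roots_of_unity_deformation
    (F : Type*) [Field F] [CharZero F] (N : ℕ) (hN : 3 ≤ N)
    (q₁ q₂ : F) (c : ℕ → F)
    (σ : TruncPolyN F N →ₐ[F] TruncPolyN F N)
    (D : TruncPolyN F N →ₗ[F] TruncPolyN F N)
    (hLeib : ∀ a b : TruncPolyN F N, D (a * b) = D a * b + σ a * D b)
    (hσ : σ (tGenN F N) = q₁ • tGenN F N + q₂ • (tGenN F N) ^ 2)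
    (hD : D (tGenN F N) = ∑ i ∈ Finset.range N, c i • (tGenN F N) ^ i)
    (hp₀ : c 0 ≠ 0) :
    ∑ i ∈ Finset.range N, q₁ ^ i = 0 := by
  set t : TruncPolyN F N := tGenN F N with htdef
  have htN : t ^ N = 0 := by
    rw [htdef, ← map_pow]
    exact Ideal.Quotient.eq_zero_iff_mem.mpr (Ideal.subset_span rfl)
  have hpow0 : ∀ m, N ≤ m → t ^ m = 0 := by
    intro m hm
    have : t ^ m = t ^ N * t ^ (m - N) := by rw [← pow_add]; congr 1; omega
    rw [this, htN, zero_mul]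
  have htN1 : t ^ (N - 1) ≠ 0 := by
    intro h
    rw [htdef, ← map_pow, Ideal.Quotient.eq_zero_iff_mem,
      Ideal.mem_span_singleton, Polynomial.X_pow_dvd_iff] at h
    have := h (N - 1) (by omega)
    simp at this
  have hD1 : D 1 = 0 := by
    have h := hLeib 1 1
    simp only [mul_one, one_mul, map_one] at h
    exact (left_eq_add.mp h)
  -- general Leibniz formula for powers
  have key : ∀ n, D (t ^ n) =
      (∑ j ∈ Finset.range n, σ t ^ j * t ^ (n - 1 - j)) * D t := by
    intro n
    induction n with
    | zero => simp [hD1]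
    | succ n ih =>
      have h1 : D (t ^ (n + 1)) = D t * t ^ n + σ t * D (t ^ n) := by
        rw [pow_succ']
        exact hLeib t (t ^ n)
      rw [h1, ih, Finset.sum_range_succ']
      simp only [Nat.add_sub_cancel, pow_zero, one_mul, Nat.sub_zero]
      have hexp : ∀ j, n - (j + 1) = n - 1 - j := by intro j; omega
      rw [add_mul, Finset.sum_mul, Finset.mul_sum]
      rw [add_comm]
      congr 1
      · rw [Finset.sum_mul]
        apply Finset.sum_congr rfl
        intro j _
        rw [pow_succ, hexp j]
        ring
      · rw [mul_comm]
  -- contraction of each term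
  have hu : ∀ j, t ^ (N - 1) * (q₁ • (1 : TruncPolyN F N) + q₂ • t) ^ j
      = q₁ ^ j • t ^ (N - 1) := by
    intro j
    induction j with
    | zero => simp
    | succ j ih =>
      have htt : t ^ (N - 1) * t = 0 := by
        rw [← pow_succ]
        exact hpow0 _ (by omega)
      rw [pow_succ, ← mul_assoc, ih, smul_mul_assoc, mul_add,
        mul_smul_comm, mul_smul_comm, mul_one, htt, smul_zero, add_zero,
        smul_smul, pow_succ]
  have hterm : ∀ j ∈ Finset.range N, σ t ^ j * t ^ (N - 1 - j)
      = q₁ ^ j • t ^ (N - 1) := by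
    intro j hj
    rw [Finset.mem_range] at hj
    have hσ' : σ t = t * (q₁ • (1 : TruncPolyN F N) + q₂ • t) := by
      rw [hσ]
      rw [mul_add, mul_smul_comm, mul_smul_comm, mul_one, sq]
    rw [hσ', mul_pow, mul_comm (t ^ j), mul_assoc, ← pow_add]
    have : j + (N - 1 - j) = N - 1 := by omega
    rw [this, mul_comm ((q₁ • (1 : TruncPolyN F N) + q₂ • t) ^ j), hu]
  -- t^(N-1) * D t = c 0 • t^(N-1)
  have hDt : t ^ (N - 1) * D t = c 0 • t ^ (N - 1) := by
    rw [hD, Finset.mul_sum]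
    rw [Finset.sum_eq_single 0]
    · simp
    · intro i _ hi
      rw [mul_smul_comm, ← pow_add]
      rw [hpow0 (N - 1 + i) (by omega), smul_zero]
    · intro h; exact absurd (Finset.mem_range.mpr (by omega)) h
  have hfinal : ((∑ i ∈ Finset.range N, q₁ ^ i) * c 0) • t ^ (N - 1) = 0 := by
    have h0 : D (t ^ N) = 0 := by rw [htN, map_zero]
    rw [key N] at h0
    rw [Finset.sum_congr rfl hterm, ← Finset.sum_smul, smul_mul_assoc, hDt,
      smul_smul] at h0
    exact h0
  rcases smul_eq_zero.mp hfinal with h | h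
  · rcases mul_eq_zero.mp h with h | h
    · exact h
    · exact absurd h hp₀
  · exact absurd h htN1
end
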